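/- arXiv:1806.00887 — 3 statements merged into one kernel-verified Lean document; each statement's English description precedes it below -/
import Mathlib

section
/- For all real numbers z and b and every natural number k, Σ_{i=0}^{k} (−1)^i · C(k,i) · (z − b·i)^k = b^k · k!. -/
open Finset Nat Function fwdDiff

private lemma fwdDiff_pow_expand (b : ℝ) (m : ℕ) :
    Δ_[b] (fun x : ℝ ↦ x ^ m) =
      ∑ j ∈ Finset.range m, (m.choose j * b ^ (m - j)) • (fun x : ℝ ↦ x ^ j) := by
  ext x
  simp only [fwdDiff, Finset.sum_apply, Pi.smul_apply, smul_eq_mul]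
  rw [add_pow]
  rw [Finset.sum_range_succ]
  simp [mul_comm, mul_assoc, mul_left_comm]

private lemma fwdDiff_iter_pow_lt (b : ℝ) :
    ∀ n, ∀ m < n, (Δ_[b])^[n] (fun x : ℝ ↦ x ^ m) = fun _ ↦ 0 := by
  intro n
  induction n with
  | zero => intro m hm; exact absurd hm (Nat.not_lt_zero m)
  | succ n IH =>
    intro m hm
    rw [Function.iterate_succ_apply, fwdDiff_pow_expand, fwdDiff_iter_finset_sum]
    have : ∀ j ∈ Finset.range m,
        (Δ_[b])^[n] ((m.choose j * b ^ (m - j)) • (fun x : ℝ ↦ x ^ j)) = fun _ ↦ 0 := by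
      intro j hj
      rw [fwdDiff_iter_const_smul, IH j (lt_of_lt_of_le (Finset.mem_range.mp hj)
        (Nat.lt_succ_iff.mp hm))]
      ext x; simp
    rw [Finset.sum_congr rfl this]
    ext x; simp

private lemma fwdDiff_iter_pow_self (b : ℝ) (n : ℕ) :
    (Δ_[b])^[n] (fun x : ℝ ↦ x ^ n) = fun _ ↦ b ^ n * n.factorial := by
  induction n with
  | zero => ext x; simp
  | succ n IH =>
    rw [Function.iterate_succ_apply, fwdDiff_pow_expand, fwdDiff_iter_finset_sum]
    rw [Finset.sum_range_succ]
    have h0 : ∀ j ∈ Finset.range n,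
        (Δ_[b])^[n] (((n + 1).choose j * b ^ (n + 1 - j)) • (fun x : ℝ ↦ x ^ j)) = fun _ ↦ 0 := by
      intro j hj
      rw [fwdDiff_iter_const_smul, fwdDiff_iter_pow_lt b n j (Finset.mem_range.mp hj)]
      ext x; simp
    rw [Finset.sum_congr rfl h0]
    ext x
    simp only [Finset.sum_apply, Pi.add_apply, Pi.zero_apply, Finset.sum_const_zero,
      fwdDiff_iter_const_smul, Pi.smul_apply, smul_eq_mul, IH]
    rw [Nat.choose_succ_self_right, Nat.add_sub_cancel_left, Nat.factorial_succ]
    push_cast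
    ring

/-- For all real `z`, `b` and every natural `k`,
`∑_{i=0}^{k} (−1)^i C(k,i) (z − b·i)^k = b^k · k!`. -/
theorem alternating_sum_shifted_power_diagonal (z b : ℝ) (k : ℕ) :
    ∑ i ∈ Finset.range (k + 1), (-1 : ℝ) ^ i * (k.choose i : ℝ) * (z - b * i) ^ k
      = b ^ k * (k.factorial : ℝ) := by
  have key := fwdDiff_iter_eq_sum_shift b (fun x : ℝ ↦ x ^ k) k (z - k * b)
  rw [fwdDiff_iter_pow_self b k] at key
  beta_reduce at key
  rw [key, ← Finset.sum_range_reflect]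
  apply Finset.sum_congr rfl
  intro i hi
  rw [Finset.mem_range, Nat.lt_succ_iff] at hi
  rw [Nat.add_sub_cancel, Nat.choose_symm hi, zsmul_eq_mul, Nat.cast_sub hi, nsmul_eq_mul]
  push_cast
  ring
end

section
/- For all natural numbers q ≥ 0 and k ≥ 1, k · Σ_{i=1}^{k} (−1)^{k−i} · C(k−1, i−1) · i^q = Σ_{i=0}^{k} (−1)^{k−i} · C(k,i) · i^{q+1}. -/
/-- For all naturals `q ≥ 0` and `k ≥ 1`,
`k · ∑_{i=1}^{k} (−1)^{k−i} C(k−1,i−1) i^q = ∑_{i=0}^{k} (−1)^{k−i} C(k,i) i^{q+1}`. -/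
theorem k_mul_shifted_sum_eq (q k : ℕ) (hk : 1 ≤ k) :
    (k : ℤ) * ∑ i ∈ Finset.Icc 1 k, (-1 : ℤ) ^ (k - i) * ((k - 1).choose (i - 1) : ℤ)
        * (i : ℤ) ^ q
      = ∑ i ∈ Finset.range (k + 1), (-1 : ℤ) ^ (k - i) * (k.choose i : ℤ)
        * (i : ℤ) ^ (q + 1) := by
  have hset : Finset.Icc 1 k = (Finset.range (k + 1)).erase 0 := by
    ext i
    simp [Finset.mem_Icc, Finset.mem_erase, Nat.lt_succ_iff, Nat.one_le_iff_ne_zero]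
  rw [Finset.mul_sum, hset]
  rw [← Finset.sum_erase (s := Finset.range (k+1)) (a := 0) (f := fun i => (-1 : ℤ) ^ (k - i) * (k.choose i : ℤ) * (i : ℤ) ^ (q + 1))
    (by simp)]
  rw [← hset]
  apply Finset.sum_congr rfl
  intro i hi
  simp only [Finset.mem_Icc] at hi
  obtain ⟨h1, h2⟩ := hi
  obtain ⟨j, rfl⟩ := Nat.exists_eq_add_of_le h1
  obtain ⟨m, rfl⟩ := Nat.exists_eq_add_of_le hk
  have hc : (1 + m) * (1 + m - 1).choose (1 + j - 1) = (1 + m).choose (1 + j) * (1 + j) := by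
    simpa [Nat.add_comm, Nat.add_one_mul_choose_eq] using (Nat.add_one_mul_choose_eq m j)
  have := congrArg (Nat.cast : ℕ → ℤ) hc
  push_cast at this
  push_cast
  linear_combination ((-1:ℤ)^(1 + m - (1 + j)) * (1+j:ℤ)^q) * this
end

section
/- For all natural numbers n ≥ 1 and k ≥ 1, the integer k divides Σ_{i=0}^{k} (−1)^{k−i} · C(k,i) · i^n; consequently MWNT(n,k) = (1/k) · Σ_{i=0}^{k} (−1)^{k−i} · C(k,i) · i^n is an integer. -/
lemma k_dvd_term (n k i : ℕ) (hn : 1 ≤ n) (hk : 1 ≤ k) :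
    (k : ℤ) ∣ (-1 : ℤ) ^ (k - i) * (k.choose i : ℤ) * (i : ℤ) ^ n := by
  rcases Nat.eq_zero_or_pos i with hi | hi
  · subst hi
    simp [zero_pow (by omega : n ≠ 0)]
  · have key : k * (k - 1).choose (i - 1) = k.choose i * i := by
      have := Nat.add_one_mul_choose_eq (k - 1) (i - 1)
      have h1 : i - 1 + 1 = i := by omega
      have h2 : k - 1 + 1 = k := by omega
      rw [h1, h2] at this
      exact this
    have : (k : ℤ) ∣ (k.choose i : ℤ) * (i : ℤ) := by
      refine ⟨((k - 1).choose (i - 1) : ℤ), ?_⟩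
      exact_mod_cast (congrArg (Nat.cast : ℕ → ℤ) key).symm
    have hpow : (i : ℤ) ^ n = (i : ℤ) * (i : ℤ) ^ (n - 1) := by
      rw [← pow_succ']
      congr 1; omega
    rw [hpow]
    obtain ⟨c, hc⟩ := this
    exact ⟨(-1:ℤ)^(k-i) * c * (i:ℤ)^(n-1), by rw [show (-1:ℤ)^(k-i) * (k.choose i:ℤ) * ((i:ℤ) * (i:ℤ)^(n-1)) = (-1:ℤ)^(k-i) * ((k.choose i:ℤ) * (i:ℤ)) * (i:ℤ)^(n-1) by ring, hc]; ring⟩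

/-- For `n ≥ 1` and `k ≥ 1`, `k` divides `∑_{i=0}^{k} (−1)^{k−i} C(k,i) i^n`;
consequently `MWNT(n,k) = (1/k) ∑_{i=0}^{k} (−1)^{k−i} C(k,i) i^n` is an integer. -/
theorem k_dvd_awnt_and_mwnt_is_integer (n k : ℕ) (hn : 1 ≤ n) (hk : 1 ≤ k) :
    (k : ℤ) ∣ ∑ i ∈ Finset.range (k + 1), (-1 : ℤ) ^ (k - i) * (k.choose i : ℤ) * (i : ℤ) ^ n ∧
    ∃ m : ℤ, (1 / (k : ℚ)) * ∑ i ∈ Finset.range (k + 1),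
        (-1 : ℚ) ^ (k - i) * (k.choose i : ℚ) * (i : ℚ) ^ n = (m : ℚ) := by
  have hdvd : (k : ℤ) ∣ ∑ i ∈ Finset.range (k + 1),
      (-1 : ℤ) ^ (k - i) * (k.choose i : ℤ) * (i : ℤ) ^ n :=
    Finset.dvd_sum fun i _ => k_dvd_term n k i hn hk
  refine ⟨hdvd, ?_⟩
  obtain ⟨m, hm⟩ := hdvd
  refine ⟨m, ?_⟩
  have hcast : (∑ i ∈ Finset.range (k + 1),
      (-1 : ℚ) ^ (k - i) * (k.choose i : ℚ) * (i : ℚ) ^ n) = ((k : ℤ) * m : ℤ) := by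
    rw [← hm]; push_cast; rfl
  have hk0 : (k : ℚ) ≠ 0 := by positivity
  rw [hcast]
  push_cast
  field_simp
end
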